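/- arXiv:1205.0377 — 2 statements merged into one kernel-verified Lean document; each statement's English description precedes it below -/
import Mathlib

section
/- For every x in (0, π/2), tan x < x + (1/3) x^(9/5) (tan x)^(6/5). -/
/-!
Put `F y = y + y ^ (9/5) * tan y ^ (6/5) / 3 - tan y`, so `F 0 = 0`; it suffices that `F' > 0`
on `(0, π/2)`. Writing `y = p⁵`, `tan y = q⁵` and taking fifth roots, `F' > 0` follows from
`3125 tan⁹ y < y⁴ (2 y sec² y + 3 tan y)⁵`, i.e. `3125 sin⁹ y cos y < y⁴ (2 y + 3 sin y cos y)⁵`.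
The right side increases with `y`, and the Cusa–Huygens inequality `y > 3 sin y / (2 + cos y)`
reduces the claim to that value of `y`, where it becomes `3125 c (2 + c)⁹ ≤ 3⁹ ((1 + c)² + 1)⁵`
for `c = cos y`: the difference is `(1 - c)²` times a polynomial with positive coefficients.
-/

open Real Set

lemma lt_of_hasDerivAt_pos {f f' : ℝ → ℝ} {a b : ℝ} (hab : a < b)
    (hf : ContinuousOn f (Icc a b)) (hf' : ∀ y ∈ Ioo a b, HasDerivAt f (f' y) y)
    (hpos : ∀ y ∈ Ioo a b, 0 < f' y) : f a < f b :=
  strictMonoOn_of_hasDerivWithinAt_pos (convex_Icc a b) hf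
    (by simpa using fun y hy ↦ (hf' y hy).hasDerivWithinAt) (by simpa using hpos)
    (left_mem_Icc.2 hab.le) (right_mem_Icc.2 hab.le) hab

lemma mul_sin_add_two_mul_cos_lt_two {x : ℝ} (hx : 0 < x) (hx2 : x ≤ π / 2) :
    x * sin x + 2 * cos x < 2 := by
  have hderiv (y : ℝ) : HasDerivAt (fun y ↦ 2 - 2 * cos y - y * sin y)
      (sin y - y * cos y) y := by
    refine ((((hasDerivAt_cos y).const_mul 2).const_sub 2).sub
      ((hasDerivAt_id' y).mul (hasDerivAt_sin y))).congr_deriv ?_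
    ring
  have hlt := lt_of_hasDerivAt_pos hx (by fun_prop) (fun y _ ↦ hderiv y)
    fun y ⟨hy0, hyx⟩ ↦ by
      have hcos : 0 < cos y := cos_pos_of_mem_Ioo ⟨by linarith, by linarith⟩
      have htan := lt_tan hy0 (by linarith)
      rw [tan_eq_sin_div_cos, lt_div_iff₀ hcos] at htan
      linarith
  simp only [cos_zero, sin_zero] at hlt
  linarith

lemma three_mul_sin_lt_mul_two_add_cos {x : ℝ} (hx : 0 < x) (hx2 : x ≤ π / 2) :
    3 * sin x < x * (2 + cos x) := by
  have hderiv (y : ℝ) : HasDerivAt (fun y ↦ y * (2 + cos y) - 3 * sin y)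
      (2 - 2 * cos y - y * sin y) y := by
    refine (((hasDerivAt_id' y).mul ((hasDerivAt_cos y).const_add 2)).sub
      ((hasDerivAt_sin y).const_mul 3)).congr_deriv ?_
    ring
  have hlt := lt_of_hasDerivAt_pos hx (by fun_prop) (fun y _ ↦ hderiv y)
    fun y ⟨hy0, hyx⟩ ↦ by linarith [mul_sin_add_two_mul_cos_lt_two hy0 (by linarith)]
  simp only [cos_zero, sin_zero] at hlt
  linarith

lemma mul_two_add_pow_nine_le_sq_add_one_pow_five {c : ℝ} (hc : 0 ≤ c) :
    3125 * c * (2 + c) ^ 9 ≤ 19683 * ((1 + c) ^ 2 + 1) ^ 5 := by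
  rw [← sub_nonneg, show 19683 * ((1 + c) ^ 2 + 1) ^ 5 - 3125 * c * (2 + c) ^ 9
    = (1 - c) ^ 2 * (629856 + 2808992 * c + 5661328 * c ^ 2 + 6710784 * c ^ 3 + 5132000 * c ^ 4
      + 2605552 * c ^ 5 + 864984 * c ^ 6 + 173696 * c ^ 7 + 16558 * c ^ 8) by ring]
  positivity

lemma sin_pow_nine_mul_cos_lt {x : ℝ} (hx : 0 < x) (hx2 : x < π / 2) :
    3125 * sin x ^ 9 * cos x < x ^ 4 * (2 * x + 3 * sin x * cos x) ^ 5 := by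
  have hs : 0 < sin x := sin_pos_of_pos_of_lt_pi hx (by linarith [pi_pos])
  have hc : 0 < cos x := cos_pos_of_mem_Ioo ⟨by linarith [pi_pos], hx2⟩
  set a := 3 * sin x / (2 + cos x)
  have hax : a < x := by
    rw [div_lt_iff₀ (by positivity)]
    exact three_mul_sin_lt_mul_two_add_cos hx hx2.le
  have ha_pow : a ^ 4 * (2 * a + 3 * sin x * cos x) ^ 5
      = 19683 * sin x ^ 9 * ((1 + cos x) ^ 2 + 1) ^ 5 / (2 + cos x) ^ 9 := by
    unfold a
    field_simp
    ring
  calc 3125 * sin x ^ 9 * cos x ≤ a ^ 4 * (2 * a + 3 * sin x * cos x) ^ 5 := by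
        rw [ha_pow, le_div_iff₀ (by positivity)]
        nlinarith [mul_two_add_pow_nine_le_sq_add_one_pow_five hc.le, pow_pos hs 9]
    _ < x ^ 4 * (2 * x + 3 * sin x * cos x) ^ 5 := by
        have ha : 0 < a := by positivity
        gcongr

lemma one_add_tan_sq_eq_inv_cos_sq {x : ℝ} (hc : cos x ≠ 0) :
    1 + tan x ^ 2 = (cos x ^ 2)⁻¹ :=
  inv_eq_iff_eq_inv.1 (inv_one_add_tan_sq hc)

lemma tan_pow_nine_lt {x : ℝ} (hx : 0 < x) (hx2 : x < π / 2) :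
    3125 * tan x ^ 9 < x ^ 4 * (2 * x * (1 + tan x ^ 2) + 3 * tan x) ^ 5 := by
  have hc : 0 < cos x := cos_pos_of_mem_Ioo ⟨by linarith [pi_pos], hx2⟩
  calc 3125 * tan x ^ 9 = 3125 * sin x ^ 9 * cos x / cos x ^ 10 := by
        rw [tan_eq_sin_div_cos]; field_simp
    _ < x ^ 4 * (2 * x + 3 * sin x * cos x) ^ 5 / cos x ^ 10 := by
        gcongr ?_ / _; exact sin_pow_nine_mul_cos_lt hx hx2
    _ = x ^ 4 * (2 * x * (1 + tan x ^ 2) + 3 * tan x) ^ 5 := by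
        rw [one_add_tan_sq_eq_inv_cos_sq hc.ne', tan_eq_sin_div_cos]; field_simp

lemma five_mul_sq_lt_of_pow_five_lt {x t k : ℝ} (hx : 0 ≤ x) (ht : 0 < t)
    (h : 3125 * t ^ 9 < x ^ 4 * (2 * x * k + 3 * t) ^ 5) :
    5 * t ^ 2 < 3 * x ^ ((4 : ℝ) / 5) * t ^ ((6 : ℝ) / 5)
      + 2 * x ^ ((9 : ℝ) / 5) * t ^ ((1 : ℝ) / 5) * k := by
  obtain ⟨p, hp, rfl⟩ : ∃ p, 0 ≤ p ∧ p ^ 5 = x :=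
    ⟨x ^ (5⁻¹ : ℝ), by positivity, rpow_inv_natCast_pow hx (by norm_num)⟩
  obtain ⟨q, hq, rfl⟩ : ∃ q, 0 < q ∧ q ^ 5 = t :=
    ⟨t ^ (5⁻¹ : ℝ), by positivity, rpow_inv_natCast_pow ht.le (by norm_num)⟩
  simp only [← rpow_natCast_mul hp, ← rpow_natCast_mul hq.le]
  norm_num
  have h5 : (5 * q ^ 9) ^ 5 < (p ^ 4 * (2 * p ^ 5 * k + 3 * q ^ 5)) ^ 5 := by linarith
  have hroot := mul_lt_mul_of_pos_right ((Odd.strictMono_pow (by decide)).lt_iff_lt.1 h5) hq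
  linarith

lemma hasDerivAt_tan_eq_one_add_tan_sq {x : ℝ} (hc : cos x ≠ 0) :
    HasDerivAt tan (1 + tan x ^ 2) x :=
  (hasDerivAt_tan hc).congr_deriv (by rw [one_add_tan_sq_eq_inv_cos_sq hc, one_div])

lemma hasDerivAt_add_rpow_mul_tan_rpow_sub_tan {y : ℝ} (hy0 : 0 < y) (hy : y < π / 2) :
    HasDerivAt (fun z ↦ z + 1 / 3 * z ^ ((9 : ℝ) / 5) * tan z ^ ((6 : ℝ) / 5) - tan z)
      (3 / 5 * y ^ ((4 : ℝ) / 5) * tan y ^ ((6 : ℝ) / 5)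
        + 2 / 5 * y ^ ((9 : ℝ) / 5) * tan y ^ ((1 : ℝ) / 5) * (1 + tan y ^ 2) - tan y ^ 2) y := by
  have hcos : cos y ≠ 0 := (cos_pos_of_mem_Ioo ⟨by linarith [pi_pos], hy⟩).ne'
  have htan := hasDerivAt_tan_eq_one_add_tan_sq hcos
  have hrpow :=
    (hasDerivAt_rpow_const (p := (9 : ℝ) / 5) (Or.inl hy0.ne')).const_mul (1 / 3)
  refine (((hasDerivAt_id' y).add (hrpow.mul (htan.rpow_const (Or.inr (by norm_num))))).sub
    htan).congr_deriv ?_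
  norm_num
  ring

theorem main_b' (x : ℝ) (hx : 0 < x) (hx2 : x < Real.pi / 2) :
    Real.tan x < x + (1 / 3) * x ^ ((9 : ℝ) / 5) * Real.tan x ^ ((6 : ℝ) / 5) := by
  have htan : ContinuousOn tan (Icc 0 x) :=
    continuousOn_tan_Ioo.mono fun y hy ↦ ⟨by linarith [pi_pos, hy.1], by linarith [hy.2]⟩
  have hlt := lt_of_hasDerivAt_pos hx (by fun_prop (disch := norm_num))
    (fun y hy ↦ hasDerivAt_add_rpow_mul_tan_rpow_sub_tan hy.1 (hy.2.trans hx2))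
    fun y ⟨hy0, hyx⟩ ↦ by
      have hty := tan_pos_of_pos_of_lt_pi_div_two hy0 (hyx.trans hx2)
      linarith [five_mul_sq_lt_of_pow_five_lt hy0.le hty (tan_pow_nine_lt hy0 (hyx.trans hx2))]
  simpa [sub_pos] using hlt
end

section
/- The function φ(x) = (9 − 24x²) cos x − 9 cos(3x) − 4x sin(3x) satisfies φ(x) > 0 for every x with 0 < x ≤ π/2. -/
/-!
By the triple-angle formulas, `φ(x) = 4 (9 c s² - 6 x² c - 3 x s + 4 x s³)` with `c = cos x`,
`s = sin x`. On `[0, 3/2]` we replace `c` and `s` by Taylor polynomials, which for `x ≥ 0`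
alternately bound `sin` and `cos` from above and below: the resulting lower bound is
`x⁸ R(x²)` (the Taylor coefficients of `φ` vanish below order 8), with `R` positive for
`x² ≤ 9/4`. On `[3/2, π/2]`, `cos x ≤ π/2 - x` is small and `sin x` is close to `1`, and the term
`x s (4 s² - 3)` dominates.
-/

open Real Finset
open scoped Nat

noncomputable def sinTaylor (n : ℕ) (x : ℝ) : ℝ :=
  ∑ k ∈ range n, (-1) ^ k * x ^ (2 * k + 1) / (2 * k + 1)!

noncomputable def cosTaylor (n : ℕ) (x : ℝ) : ℝ :=
  ∑ k ∈ range n, (-1) ^ k * x ^ (2 * k) / (2 * k)!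

theorem hasDerivAt_sinTaylor (n : ℕ) (x : ℝ) : HasDerivAt (sinTaylor n) (cosTaylor n x) x := by
  refine HasDerivAt.fun_sum fun k _ =>
    (((hasDerivAt_pow (2 * k + 1) x).const_mul ((-1 : ℝ) ^ k)).div_const _).congr_deriv ?_
  rw [Nat.factorial_succ, Nat.add_sub_cancel]
  push_cast
  field_simp

theorem cosTaylor_succ (n : ℕ) (x : ℝ) :
    cosTaylor (n + 1) x = 1 - ∑ k ∈ range n, (-1) ^ k * x ^ (2 * k + 2) / (2 * k + 2)! := by
  rw [cosTaylor, sum_range_succ', sub_eq_add_neg, ← sum_neg_distrib, add_comm]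
  simp [pow_succ, mul_add, neg_div]

theorem hasDerivAt_cosTaylor_succ (n : ℕ) (x : ℝ) :
    HasDerivAt (cosTaylor (n + 1)) (-sinTaylor n x) x := by
  rw [funext (cosTaylor_succ n), sinTaylor]
  refine (HasDerivAt.fun_sum fun k _ => ?_).const_sub 1
  refine (((hasDerivAt_pow (2 * k + 2) x).const_mul ((-1 : ℝ) ^ k)).div_const _).congr_deriv ?_
  rw [show 2 * k + 2 - 1 = 2 * k + 1 by omega, Nat.factorial_succ]
  push_cast
  field_simp
  ring

theorem nonneg_of_hasDerivAt_nonneg {f f' : ℝ → ℝ} (hf : ∀ y, HasDerivAt f (f' y) y)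
    (h0 : f 0 = 0) (hf' : ∀ y, 0 < y → 0 ≤ f' y) {x : ℝ} (hx : 0 ≤ x) : 0 ≤ f x := by
  have hmono : MonotoneOn f (Set.Ici 0) :=
    monotoneOn_of_hasDerivWithinAt_nonneg (convex_Ici 0)
      (fun y _ => (hf y).continuousAt.continuousWithinAt)
      (fun y _ => (hf y).hasDerivWithinAt) (fun y hy => hf' y (by simpa using hy))
  simpa [h0] using hmono Set.self_mem_Ici hx hx

theorem neg_one_pow_mul_sin_sub_sinTaylor_nonneg_of_cos {n : ℕ}
    (hcos : ∀ y, 0 ≤ y → 0 ≤ (-1) ^ n * (cos y - cosTaylor n y)) {x : ℝ} (hx : 0 ≤ x) :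
    0 ≤ (-1) ^ n * (sin x - sinTaylor n x) :=
  nonneg_of_hasDerivAt_nonneg
    (fun y => ((hasDerivAt_sin y).sub (hasDerivAt_sinTaylor n y)).const_mul _)
    (by simp [sinTaylor]) (fun y hy => hcos y hy.le) hx

theorem neg_one_pow_mul_cos_sub_cosTaylor_nonneg {n : ℕ} (hn : 1 ≤ n) {x : ℝ} (hx : 0 ≤ x) :
    0 ≤ (-1) ^ n * (cos x - cosTaylor n x) := by
  induction n, hn using Nat.le_induction generalizing x with
  | base => simp [cosTaylor, cos_le_one]
  | succ n _ ih =>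
    have hsin (y : ℝ) (hy : 0 ≤ y) :=
      neg_one_pow_mul_sin_sub_sinTaylor_nonneg_of_cos (fun _ => ih) hy
    exact nonneg_of_hasDerivAt_nonneg
      (fun y => ((hasDerivAt_cos y).sub (hasDerivAt_cosTaylor_succ n y)).const_mul _)
      (by simp [cosTaylor_succ]) (fun y hy => (hsin y hy.le).trans_eq (by ring)) hx

theorem neg_one_pow_mul_sin_sub_sinTaylor_nonneg {n : ℕ} (hn : 1 ≤ n) {x : ℝ} (hx : 0 ≤ x) :
    0 ≤ (-1) ^ n * (sin x - sinTaylor n x) :=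
  neg_one_pow_mul_sin_sub_sinTaylor_nonneg_of_cos
    (fun _ => neg_one_pow_mul_cos_sub_cosTaylor_nonneg hn) hx

theorem cos_le_cosTaylor_two_mul_add_one (m : ℕ) {x : ℝ} (hx : 0 ≤ x) :
    cos x ≤ cosTaylor (2 * m + 1) x := by
  have h := neg_one_pow_mul_cos_sub_cosTaylor_nonneg (n := 2 * m + 1) (by omega) hx
  rw [(odd_two_mul_add_one m).neg_one_pow] at h
  linarith

theorem cosTaylor_two_mul_add_two_le_cos (m : ℕ) {x : ℝ} (hx : 0 ≤ x) :
    cosTaylor (2 * m + 2) x ≤ cos x := by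
  have h := neg_one_pow_mul_cos_sub_cosTaylor_nonneg (n := 2 * m + 2) (by omega) hx
  rw [(show Even (2 * m + 2) from ⟨m + 1, by ring⟩).neg_one_pow] at h
  linarith

theorem sin_le_sinTaylor_two_mul_add_one (m : ℕ) {x : ℝ} (hx : 0 ≤ x) :
    sin x ≤ sinTaylor (2 * m + 1) x := by
  have h := neg_one_pow_mul_sin_sub_sinTaylor_nonneg (n := 2 * m + 1) (by omega) hx
  rw [(odd_two_mul_add_one m).neg_one_pow] at h
  linarith

theorem sinTaylor_two_mul_add_two_le_sin (m : ℕ) {x : ℝ} (hx : 0 ≤ x) :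
    sinTaylor (2 * m + 2) x ≤ sin x := by
  have h := neg_one_pow_mul_sin_sub_sinTaylor_nonneg (n := 2 * m + 2) (by omega) hx
  rw [(show Even (2 * m + 2) from ⟨m + 1, by ring⟩).neg_one_pow] at h
  linarith

def phiPoly (x c s : ℝ) : ℝ := 9 * c * s ^ 2 - 6 * x ^ 2 * c - 3 * x * s + 4 * x * s ^ 3

theorem phi_eq_four_mul_phiPoly (x : ℝ) :
    (9 - 24 * x ^ 2) * cos x - 9 * cos (3 * x) - 4 * x * sin (3 * x) =
      4 * phiPoly x (cos x) (sin x) := by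
  rw [cos_three_mul, sin_three_mul, phiPoly]
  linear_combination (-36 * cos x) * sin_sq_add_cos_sq x

theorem phiPoly_lower_bound {x c s cl cu sl su : ℝ} (hx : 0 ≤ x) (hcl : 0 ≤ cl) (hc : cl ≤ c)
    (hcu : c ≤ cu) (hsl : 0 ≤ sl) (hs : sl ≤ s) (hsu : s ≤ su) :
    9 * cl * sl ^ 2 - 6 * x ^ 2 * cu - 3 * x * su + 4 * x * sl ^ 3 ≤ phiPoly x c s := by
  have hc0 : 0 ≤ c := hcl.trans hc
  unfold phiPoly
  gcongr

theorem taylor_quotient_pos {t : ℝ} (ht : 0 ≤ t) (ht' : t ≤ 9 / 4) :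
    0 < 113 / 1680 - 773 / 43200 * t + 407 / 201600 * t ^ 2 - 2353 / 16934400 * t ^ 3
      + 71 / 11289600 * t ^ 4 - 191 / 1016064000 * t ^ 5 + 1 / 290304000 * t ^ 6
      - 1 / 32006016000 * t ^ 7 := by
  have hu := sub_nonneg.2 ht'
  nlinarith [mul_nonneg ht hu, pow_nonneg ht 3, pow_nonneg ht 5, pow_nonneg ht 7,
    mul_nonneg (pow_nonneg ht 2) hu, mul_nonneg (pow_nonneg ht 4) hu,
    mul_nonneg (pow_nonneg ht 6) hu]

theorem phiPoly_taylor_lower_bound_pos {x : ℝ} (hx : 0 < x) (hx' : x ≤ 3 / 2) :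
    0 < 9 * cosTaylor 4 x * sinTaylor 4 x ^ 2 - 6 * x ^ 2 * cosTaylor 3 x
      - 3 * x * sinTaylor 3 x + 4 * x * sinTaylor 4 x ^ 3 := by
  have expand : 9 * cosTaylor 4 x * sinTaylor 4 x ^ 2 - 6 * x ^ 2 * cosTaylor 3 x
      - 3 * x * sinTaylor 3 x + 4 * x * sinTaylor 4 x ^ 3 =
      x ^ 8 * (113 / 1680 - 773 / 43200 * (x ^ 2) + 407 / 201600 * (x ^ 2) ^ 2
        - 2353 / 16934400 * (x ^ 2) ^ 3 + 71 / 11289600 * (x ^ 2) ^ 4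
        - 191 / 1016064000 * (x ^ 2) ^ 5 + 1 / 290304000 * (x ^ 2) ^ 6
        - 1 / 32006016000 * (x ^ 2) ^ 7) := by
    simp [cosTaylor, sinTaylor, sum_range_succ, Nat.factorial]
    ring
  rw [expand]
  exact mul_pos (by positivity) (taylor_quotient_pos (sq_nonneg x) (by nlinarith))

theorem phiPoly_pos_of_le {x : ℝ} (hx : 0 < x) (hx' : x ≤ 3 / 2) :
    0 < phiPoly x (cos x) (sin x) := by
  have hx0 := hx.le
  have hx2 : x ^ 2 ≤ 9 / 4 := by nlinarith
  have hcos4 : 0 ≤ cosTaylor 4 x := by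
    simp [cosTaylor, sum_range_succ, Nat.factorial]
    nlinarith [mul_nonneg (sq_nonneg x) (sub_nonneg.2 hx2), pow_nonneg (sq_nonneg x) 3]
  have hsin4 : 0 ≤ sinTaylor 4 x := by
    simp [sinTaylor, sum_range_succ, Nat.factorial]
    nlinarith [mul_nonneg (sq_nonneg x) (sub_nonneg.2 hx2), pow_nonneg (sq_nonneg x) 3]
  exact (phiPoly_taylor_lower_bound_pos hx hx').trans_le <| phiPoly_lower_bound hx0
    hcos4 (cosTaylor_two_mul_add_two_le_cos 1 hx0) (cos_le_cosTaylor_two_mul_add_one 1 hx0)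
    hsin4 (sinTaylor_two_mul_add_two_le_sin 1 hx0) (sin_le_sinTaylor_two_mul_add_one 1 hx0)

theorem phiPoly_pos_of_ge {x : ℝ} (hx : 3 / 2 ≤ x) (hx' : x ≤ π / 2) :
    0 < phiPoly x (cos x) (sin x) := by
  have hpi := pi_lt_d2
  have hc0 : 0 ≤ cos x := cos_nonneg_of_mem_Icc ⟨by linarith [pi_pos], hx'⟩
  have hc : cos x ≤ 3 / 40 := by
    rw [← sin_pi_div_two_sub]
    linarith [sin_le (show 0 ≤ π / 2 - x by linarith)]
  have hs2 : 99 / 100 ≤ sin x ^ 2 := by nlinarith [sin_sq_add_cos_sq x]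
  have hs0 : 0 ≤ sin x := sin_nonneg_of_nonneg_of_le_pi (by linarith) (by linarith [pi_pos])
  have hs : 99 / 100 ≤ sin x := by nlinarith [sin_le_one x]
  have hcos_term : x ^ 2 * cos x ≤ (63 / 40) ^ 2 * (3 / 40) := by
    gcongr
    linarith
  have hsin_term :
      3 / 2 * (99 / 100) * (4 * (99 / 100) - 3) ≤ x * sin x * (4 * sin x ^ 2 - 3) := by
    gcongr
  have hsplit : phiPoly x (cos x) (sin x) =
      9 * cos x * sin x ^ 2 - 6 * (x ^ 2 * cos x) + x * sin x * (4 * sin x ^ 2 - 3) := by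
    unfold phiPoly
    ring
  rw [hsplit]
  linarith [mul_nonneg hc0 (sq_nonneg (sin x))]

theorem phi_pos (x : ℝ) (hx : 0 < x) (hx2 : x ≤ Real.pi / 2) :
    0 < (9 - 24 * x ^ 2) * Real.cos x - 9 * Real.cos (3 * x) - 4 * x * Real.sin (3 * x) := by
  rw [phi_eq_four_mul_phiPoly]
  refine mul_pos four_pos ?_
  rcases le_total x (3 / 2) with h | h
  · exact phiPoly_pos_of_le hx h
  · exact phiPoly_pos_of_ge h hx2
end
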